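/- Let f, g ∈ ℂ[[X,Y]] be nonzero formal power series in two variables. Then the Newton diagram of the product satisfies Δ_{fg} = Δ_f + Δ_g, where the right-hand side is the Minkowski sum of the two Newton diagrams. -/

import Mathlib

open Pointwise

/-- The closed first quadrant `ℝ₊² = [0,∞)²` of `ℝ²`. -/
def firstQuadrant : Set (ℝ × ℝ) := {p | 0 ≤ p.1 ∧ 0 ≤ p.2}

/-- The Newton diagram of a set `S ⊆ ℝ²`: the convex hull of the union of the
translates `s + ℝ₊²` over `s ∈ S`. -/
noncomputable def newtonDiagram (S : Set (ℝ × ℝ)) : Set (ℝ × ℝ) :=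
  convexHull ℝ (⋃ s ∈ S, (fun q => s + q) '' firstQuadrant)

/-- The support of a two-variable formal power series, viewed as a subset of `ℝ²`. -/
def powerSeriesSupport (h : MvPowerSeries (Fin 2) ℂ) : Set (ℝ × ℝ) :=
  {p | ∃ d : Fin 2 →₀ ℕ, MvPowerSeries.coeff d h ≠ 0 ∧ p = ((d 0 : ℝ), (d 1 : ℝ))}

/-- The Newton diagram of a formal power series `h ∈ ℂ[[X,Y]]`. -/
noncomputable def newtonDiagramOf (h : MvPowerSeries (Fin 2) ℂ) : Set (ℝ × ℝ) :=
  newtonDiagram (powerSeriesSupport h)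


/-!
Every exponent of `f * g` is a sum of an exponent of `f` and one of `g`, which gives
`Δ_{fg} ⊆ Δ_f + Δ_g`. Conversely it suffices to show `a + b ∈ Δ_{fg}` for exponents `a` of `f`
and `b` of `g`. The Newton diagram of a set of lattice points is closed, being spanned by its
finitely many minimal points (Dickson's lemma), so if `a + b ∉ Δ_{fg}` a linear form separates
them strictly. The form is nonnegative on the quadrant and, scaled by a large integer and rounded
up, becomes an integral weight `w` with `w(a + b) < w(e)` for every exponent `e` of `f * g`. This
contradicts the additivity of the `w`-order in the domain `ℂ[[X,Y]]`:
`ord_w (f * g) = ord_w f + ord_w g ≤ w(a) + w(b)`.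
-/

open MvPowerSeries Finsupp

theorem firstQuadrant_eq_Ici : firstQuadrant = Set.Ici 0 := rfl

theorem firstQuadrant_add_firstQuadrant : firstQuadrant + firstQuadrant = firstQuadrant := by
  rw [firstQuadrant_eq_Ici]
  ext p
  refine ⟨?_, fun hp => ⟨p, hp, 0, le_refl (0 : ℝ × ℝ), add_zero p⟩⟩
  rintro ⟨x, hx, y, hy, rfl⟩
  exact add_nonneg (Set.mem_Ici.mp hx) (Set.mem_Ici.mp hy)

theorem newtonDiagram_eq_convexHull_add (S : Set (ℝ × ℝ)) :
    newtonDiagram S = convexHull ℝ S + firstQuadrant := by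
  rw [newtonDiagram, Set.iUnion_add_left_image, convexHull_add, firstQuadrant_eq_Ici,
    (convex_Ici 0).convexHull_eq]

theorem newtonDiagram_add_firstQuadrant (S : Set (ℝ × ℝ)) :
    newtonDiagram S + firstQuadrant = newtonDiagram S := by
  rw [newtonDiagram_eq_convexHull_add, add_assoc, firstQuadrant_add_firstQuadrant]

theorem convex_newtonDiagram (S : Set (ℝ × ℝ)) : Convex ℝ (newtonDiagram S) :=
  convex_convexHull ℝ _

theorem mem_newtonDiagram_of_le {S : Set (ℝ × ℝ)} {s p : ℝ × ℝ} (hs : s ∈ S) (hsp : s ≤ p) :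
    p ∈ newtonDiagram S := by
  rw [newtonDiagram_eq_convexHull_add]
  exact ⟨s, subset_convexHull ℝ S hs, p - s, sub_nonneg.mpr hsp, add_sub_cancel s p⟩

theorem subset_newtonDiagram (S : Set (ℝ × ℝ)) : S ⊆ newtonDiagram S :=
  fun _ hs => mem_newtonDiagram_of_le hs le_rfl

theorem newtonDiagram_subset {S T : Set (ℝ × ℝ)} (h : S ⊆ newtonDiagram T) :
    newtonDiagram S ⊆ newtonDiagram T := by
  rw [newtonDiagram_eq_convexHull_add S, ← newtonDiagram_add_firstQuadrant T]
  exact Set.add_subset_add_right (convexHull_min h (convex_newtonDiagram T))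

theorem newtonDiagram_mono {S T : Set (ℝ × ℝ)} (h : S ⊆ T) :
    newtonDiagram S ⊆ newtonDiagram T :=
  newtonDiagram_subset (h.trans (subset_newtonDiagram T))

theorem newtonDiagram_add (S T : Set (ℝ × ℝ)) :
    newtonDiagram (S + T) = newtonDiagram S + newtonDiagram T := by
  rw [newtonDiagram_eq_convexHull_add, newtonDiagram_eq_convexHull_add,
    newtonDiagram_eq_convexHull_add, convexHull_add, add_add_add_comm,
    firstQuadrant_add_firstQuadrant]

theorem isClosed_newtonDiagram_of_finite {S : Set (ℝ × ℝ)} (hS : S.Finite) :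
    IsClosed (newtonDiagram S) := by
  rw [newtonDiagram_eq_convexHull_add, firstQuadrant_eq_Ici]
  exact isClosed_Ici.add_left_of_isCompact (hS.isCompact_convexHull (𝕜 := ℝ))

def toPlane (d : Fin 2 →₀ ℕ) : ℝ × ℝ := ((d 0 : ℝ), (d 1 : ℝ))

theorem toPlane_add (a b : Fin 2 →₀ ℕ) : toPlane (a + b) = toPlane a + toPlane b := by
  simp [toPlane]

theorem toPlane_mono : Monotone toPlane :=
  fun _ _ h => ⟨Nat.cast_le.mpr (h 0), Nat.cast_le.mpr (h 1)⟩

theorem powerSeriesSupport_eq_image (h : MvPowerSeries (Fin 2) ℂ) :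
    powerSeriesSupport h = toPlane '' {d | coeff d h ≠ 0} := by
  ext p
  exact ⟨fun ⟨d, hd, hp⟩ => ⟨d, hd, hp.symm⟩, fun ⟨d, hd, hp⟩ => ⟨d, hd, hp.symm⟩⟩

theorem isClosed_newtonDiagram_image_toPlane (T : Set (Fin 2 →₀ ℕ)) :
    IsClosed (newtonDiagram (toPlane '' T)) := by
  set M := {d | Minimal (· ∈ T) d}
  have hM : M.Finite := WellQuasiOrderedLE.finite_of_isAntichain (setOfPred_minimal_antichain _)
  suffices newtonDiagram (toPlane '' T) = newtonDiagram (toPlane '' M) from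
    this ▸ isClosed_newtonDiagram_of_finite (hM.image toPlane)
  refine (newtonDiagram_subset ?_).antisymm
    (newtonDiagram_mono (Set.image_mono fun _ hd => hd.prop))
  rintro _ ⟨d, hd, rfl⟩
  obtain ⟨m, hmd, hm⟩ := exists_minimal_le_of_wellFoundedLT (· ∈ T) d hd
  exact mem_newtonDiagram_of_le ⟨m, hm, rfl⟩ (toPlane_mono hmd)

theorem nonneg_of_forall_lt_add_mul {a b u : ℝ} (h : ∀ t, 0 ≤ t → u < a + t * b) : 0 ≤ b := by
  by_contra! hb
  have hau : u < a := by simpa using h 0 le_rfl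
  have := h ((a - u) / -b) (div_nonneg (by linarith) (by linarith))
  rw [div_mul_eq_mul_div, mul_div_assoc, div_neg, div_self hb.ne, mul_neg, mul_one] at this
  linarith

theorem cast_weight_eq_sum {σ : Type*} [Fintype σ] (w : σ → ℕ) (d : σ →₀ ℕ) :
    (weight w d : ℝ) = ∑ i, (d i : ℝ) * w i := by
  simp [weight_apply, sum_fintype]

theorem exists_weight_lt_of_real_weight {σ : Type*} [Fintype σ] {α : σ → ℝ} (hα : 0 ≤ α)
    {c : σ →₀ ℕ} {u : ℝ} (hc : ∑ i, (c i : ℝ) * α i < u) (T : Set (σ →₀ ℕ))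
    (hT : ∀ d ∈ T, u < ∑ i, (d i : ℝ) * α i) :
    ∃ w : σ → ℕ, ∀ d ∈ T, weight w c < weight w d := by
  obtain ⟨N, hN⟩ := exists_nat_gt ((∑ i, (c i : ℝ)) / (u - ∑ i, (c i : ℝ) * α i))
  have hN' : ∑ i, (c i : ℝ) < N * (u - ∑ i, (c i : ℝ) * α i) := (div_lt_iff₀ (by linarith)).mp hN
  refine ⟨fun i => ⌈N * α i⌉₊, fun d hd => ?_⟩
  have hwc : (weight (fun i => ⌈N * α i⌉₊) c : ℝ) < N * u := by
    rw [cast_weight_eq_sum]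
    calc ∑ i, (c i : ℝ) * ⌈N * α i⌉₊ ≤ ∑ i, (c i : ℝ) * (N * α i + 1) := by
          gcongr with i
          exact (Nat.ceil_lt_add_one (mul_nonneg N.cast_nonneg (hα i))).le
      _ = N * ∑ i, (c i : ℝ) * α i + ∑ i, (c i : ℝ) := by
          rw [Finset.mul_sum, ← Finset.sum_add_distrib]
          exact Finset.sum_congr rfl fun i _ => by ring
      _ < N * u := by linarith
  have hwd : N * u ≤ (weight (fun i => ⌈N * α i⌉₊) d : ℝ) := by
    rw [cast_weight_eq_sum]
    calc (N : ℝ) * u ≤ N * ∑ i, (d i : ℝ) * α i := by gcongr; exact (hT d hd).le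
      _ = ∑ i, (d i : ℝ) * (N * α i) := by
          rw [Finset.mul_sum]
          exact Finset.sum_congr rfl fun i _ => by ring
      _ ≤ ∑ i, (d i : ℝ) * ⌈N * α i⌉₊ := by gcongr with i; exact Nat.le_ceil _
  exact_mod_cast hwc.trans_le hwd

theorem exists_weight_lt_of_toPlane_notMem (T : Set (Fin 2 →₀ ℕ)) {c : Fin 2 →₀ ℕ}
    (hc : toPlane c ∉ newtonDiagram (toPlane '' T)) :
    ∃ w : Fin 2 → ℕ, ∀ d ∈ T, weight w c < weight w d := by
  rcases T.eq_empty_or_nonempty with rfl | ⟨d₀, hd₀⟩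
  · exact ⟨0, by simp⟩
  obtain ⟨φ, u, hφc, hφT⟩ := geometric_hahn_banach_point_closed (convex_newtonDiagram _)
    (isClosed_newtonDiagram_image_toPlane T) hc
  set α : Fin 2 → ℝ := ![φ (1, 0), φ (0, 1)]
  have hφ : ∀ d, φ (toPlane d) = ∑ i, (d i : ℝ) * α i := by
    intro d
    have : toPlane d = (d 0 : ℝ) • ((1 : ℝ), (0 : ℝ)) + (d 1 : ℝ) • ((0 : ℝ), (1 : ℝ)) := by
      simp [toPlane]
    rw [this, map_add, map_smul, map_smul, Fin.sum_univ_two]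
    rfl
  have hφ_nonneg : ∀ v, 0 ≤ v → 0 ≤ φ v := fun v hv =>
    nonneg_of_forall_lt_add_mul fun t ht => by
      have := hφT (toPlane d₀ + t • v)
        (mem_newtonDiagram_of_le ⟨d₀, hd₀, rfl⟩ (le_add_of_nonneg_right (smul_nonneg ht hv)))
      rwa [map_add, map_smul, smul_eq_mul] at this
  have hα : 0 ≤ α := by
    rw [Pi.le_def, Fin.forall_fin_two]
    exact ⟨hφ_nonneg _ (by simp [Prod.le_def]), hφ_nonneg _ (by simp [Prod.le_def])⟩
  exact exists_weight_lt_of_real_weight hα (hφ c ▸ hφc) T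
    fun d hd => hφ d ▸ hφT _ (subset_newtonDiagram _ ⟨d, hd, rfl⟩)

theorem powerSeriesSupport_mul_subset (f g : MvPowerSeries (Fin 2) ℂ) :
    powerSeriesSupport (f * g) ⊆ powerSeriesSupport f + powerSeriesSupport g := by
  simp only [powerSeriesSupport_eq_image]
  rintro _ ⟨d, hd : coeff d (f * g) ≠ 0, rfl⟩
  rw [coeff_mul] at hd
  obtain ⟨⟨a, b⟩, hab, hne⟩ := Finset.exists_ne_zero_of_sum_ne_zero hd
  rw [Finset.HasAntidiagonal.mem_antidiagonal] at hab
  exact ⟨_, ⟨a, left_ne_zero_of_mul hne, rfl⟩, _, ⟨b, right_ne_zero_of_mul hne, rfl⟩,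
    hab ▸ (toPlane_add a b).symm⟩

theorem powerSeriesSupport_add_subset_newtonDiagramOf_mul (f g : MvPowerSeries (Fin 2) ℂ) :
    powerSeriesSupport f + powerSeriesSupport g ⊆ newtonDiagramOf (f * g) := by
  rw [newtonDiagramOf, powerSeriesSupport_eq_image, powerSeriesSupport_eq_image,
    powerSeriesSupport_eq_image]
  rintro _ ⟨_, ⟨a, ha : coeff a f ≠ 0, rfl⟩, _, ⟨b, hb : coeff b g ≠ 0, rfl⟩, rfl⟩
  show toPlane a + toPlane b ∈ _
  rw [← toPlane_add]
  by_contra hab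
  obtain ⟨w, hw⟩ := exists_weight_lt_of_toPlane_notMem _ hab
  have hfg : f * g ≠ 0 := mul_ne_zero (fun h => ha (by simp [h])) (fun h => hb (by simp [h]))
  obtain ⟨e, he, hew⟩ :=
    exists_coeff_ne_zero_and_weightedOrder w ((ne_zero_iff_weightedOrder_finite w).mp hfg)
  have hle : (weight w e : ℕ∞) ≤ weight w (a + b) := by
    rw [hew, weightedOrder_mul, map_add, Nat.cast_add]
    exact add_le_add (weightedOrder_le w ha) (weightedOrder_le w hb)
  exact (hw e he).not_ge (by exact_mod_cast hle)

theorem newtonDiagram_mul_general (f g : MvPowerSeries (Fin 2) ℂ) :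
    newtonDiagramOf (f * g) = newtonDiagramOf f + newtonDiagramOf g := by
  rw [newtonDiagramOf, newtonDiagramOf, newtonDiagramOf, ← newtonDiagram_add]
  exact (newtonDiagram_mono (powerSeriesSupport_mul_subset f g)).antisymm
    (newtonDiagram_subset (powerSeriesSupport_add_subset_newtonDiagramOf_mul f g))

/-- For nonzero `f, g ∈ ℂ[[X,Y]]`, the Newton diagram of the product
is the Minkowski sum of the Newton diagrams: `Δ_{fg} = Δ_f + Δ_g`. -/
theorem newtonDiagram_mul (f g : MvPowerSeries (Fin 2) ℂ) (hf : f ≠ 0) (hg : g ≠ 0) :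
    newtonDiagramOf (f * g) = newtonDiagramOf f + newtonDiagramOf g :=
  newtonDiagram_mul_general f g
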